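/- Assume the outlier model with L nonempty, and assume that for every observation matrix Y = (y_1,…,y_n) with y_i ∈ ℝ^p the normalizing constant ∫ (∏_{i=1}^n |Ω|^{1/2} exp(−y_iᵀΩy_i/2)) π(Ω) dΩ is finite, and that it is strictly positive for the data D(z) (for every z > 0) and for D*. Then the standard Gaussian (Kullback–Leibler) posterior does NOT satisfy posterior robustness: it is not the case that ∫ |π_KL(Ω | D(z)) − π_KL(Ω | D*)| dΩ → 0 as z → ∞. -/

import Mathlib

open MeasureTheory Matrix Filter Topology

instance matrixMeasurableSpace {m n α : Type*} [MeasurableSpace α] :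
    MeasurableSpace (Matrix m n α) :=
  inferInstanceAs (MeasurableSpace (m → n → α))

/-- Build a symmetric `p × p` matrix from its upper-triangular entries. -/
noncomputable def symOfUpper (p : ℕ) (x : {ij : Fin p × Fin p // ij.1 ≤ ij.2} → ℝ) :
    Matrix (Fin p) (Fin p) ℝ :=
  Matrix.of fun i j => if h : i ≤ j then x ⟨(i, j), h⟩ else x ⟨(j, i), le_of_not_ge h⟩

/-- Unnormalized Gaussian (Kullback–Leibler) posterior density:
`(∏_{i ∈ S} |Ω|^{1/2} exp(−y_iᵀΩy_i/2)) π(Ω)`. -/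
noncomputable def qKL {p n : ℕ} (pr : Matrix (Fin p) (Fin p) ℝ → ℝ)
    (S : Finset (Fin n)) (Y : Fin n → (Fin p → ℝ)) (Ω : Matrix (Fin p) (Fin p) ℝ) : ℝ :=
  (∏ i ∈ S, Ω.det ^ (1 / 2 : ℝ) * Real.exp (-(Y i ⬝ᵥ (Ω *ᵥ Y i)) / 2)) * pr Ω

/-- Observations in the outlier model: `y_i(z) = a_i` for `i ∈ K`, and `a_i + z • b_i` else. -/
noncomputable def yData {p n : ℕ} (z : ℝ) (K : Finset (Fin n)) (a b : Fin n → (Fin p → ℝ)) :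
    Fin n → (Fin p → ℝ) :=
  fun i => if i ∈ K then a i else a i + z • b i

/-! ### Auxiliary material for the proof -/

lemma symOfUpper_add (p : ℕ) (x y : {ij : Fin p × Fin p // ij.1 ≤ ij.2} → ℝ) :
    symOfUpper p (x + y) = symOfUpper p x + symOfUpper p y := by
  ext i j
  by_cases h : i ≤ j <;> simp [symOfUpper, h]

lemma symOfUpper_smul (p : ℕ) (r : ℝ) (x : {ij : Fin p × Fin p // ij.1 ≤ ij.2} → ℝ) :
    symOfUpper p (r • x) = r • symOfUpper p x := by
  ext i j
  by_cases h : i ≤ j <;> simp [symOfUpper, h]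

/-- The quadratic-form-in-`Ω` map `x ↦ uᵀ (symOfUpper x) v` as a linear map. -/
noncomputable def quadForm (p : ℕ) (u v : Fin p → ℝ) :
    ({ij : Fin p × Fin p // ij.1 ≤ ij.2} → ℝ) →ₗ[ℝ] ℝ where
  toFun x := u ⬝ᵥ (symOfUpper p x *ᵥ v)
  map_add' x y := by simp only [symOfUpper_add, add_mulVec, dotProduct_add]
  map_smul' r x := by
    simp only [symOfUpper_smul, smul_mulVec, dotProduct_smul, smul_eq_mul,
      RingHom.id_apply]

@[simp] lemma quadForm_apply (p : ℕ) (u v : Fin p → ℝ)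
    (x : {ij : Fin p × Fin p // ij.1 ≤ ij.2} → ℝ) :
    quadForm p u v x = u ⬝ᵥ (symOfUpper p x *ᵥ v) := rfl

/-- A level set of a nonzero linear functional on a finite-dimensional pi type is null. -/
lemma volume_level_set {ι : Type*} [Fintype ι] {ℓ : (ι → ℝ) →ₗ[ℝ] ℝ} (h : ℓ ≠ 0) (t : ℝ) :
    volume {x : ι → ℝ | ℓ x = t} = 0 := by
  obtain ⟨u, hu⟩ : ∃ u, ℓ u ≠ 0 := by
    by_contra hc
    push_neg at hc
    exact h (LinearMap.ext fun x => by simp [hc x])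
  set xt : ι → ℝ := (t / ℓ u) • u with hxt
  have hℓxt : ℓ xt = t := by
    rw [hxt, LinearMap.map_smul, smul_eq_mul]
    field_simp
  have hset : {x : ι → ℝ | ℓ x = t} = (fun y => y + (-xt)) ⁻¹' (LinearMap.ker ℓ : Set (ι → ℝ)) := by
    ext x
    simp only [Set.mem_setOf_eq, Set.mem_preimage, SetLike.mem_coe, LinearMap.mem_ker, map_add,
      map_neg, hℓxt]
    constructor
    · intro hx; rw [hx]; ring
    · intro hx; linarith
  rw [hset, measure_preimage_add_right]
  exact Measure.addHaar_submodule volume (LinearMap.ker ℓ)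
    (by simpa [LinearMap.ker_eq_top] using h)

lemma measurable_symEntry (p : ℕ) (i j : Fin p) :
    Measurable fun x : {ij : Fin p × Fin p // ij.1 ≤ ij.2} → ℝ => symOfUpper p x i j := by
  by_cases h : i ≤ j <;> simp only [symOfUpper, Matrix.of_apply, h, dite_true, dite_false] <;>
    exact measurable_pi_apply _

lemma measurable_symOfUpper (p : ℕ) : Measurable (symOfUpper p) :=
  measurable_pi_lambda _ fun i => measurable_pi_lambda _ fun j => measurable_symEntry p i j

lemma measurable_quad (p : ℕ) (u v : Fin p → ℝ) :
    Measurable fun x : {ij : Fin p × Fin p // ij.1 ≤ ij.2} → ℝ =>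
      u ⬝ᵥ (symOfUpper p x *ᵥ v) := by
  simp only [dotProduct, mulVec]
  exact Finset.measurable_sum _ fun j _ =>
    (Finset.measurable_sum _ fun k _ =>
      ((measurable_symEntry p j k).mul measurable_const)).const_mul _

lemma measurable_detSym (p : ℕ) :
    Measurable fun x : {ij : Fin p × Fin p // ij.1 ≤ ij.2} → ℝ => (symOfUpper p x).det := by
  simp only [Matrix.det_apply]
  exact Finset.measurable_sum _ fun σ _ =>
    (Finset.measurable_prod _ fun i _ => measurable_symEntry p (σ i) i).const_smul _

lemma measurable_qKLsym {p n : ℕ} {pr : Matrix (Fin p) (Fin p) ℝ → ℝ} (hpr : Measurable pr)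
    (S : Finset (Fin n)) (Y : Fin n → (Fin p → ℝ)) :
    Measurable fun x : {ij : Fin p × Fin p // ij.1 ≤ ij.2} → ℝ =>
      qKL pr S Y (symOfUpper p x) := by
  unfold qKL
  refine Measurable.mul ?_ (hpr.comp (measurable_symOfUpper p))
  refine Finset.measurable_prod _ fun i _ => Measurable.mul ?_ ?_
  · have : (fun x : {ij : Fin p × Fin p // ij.1 ≤ ij.2} → ℝ =>
        (symOfUpper p x).det ^ (1 / 2 : ℝ)) =
        fun x => Real.sqrt (symOfUpper p x).det :=
      funext fun x => (Real.sqrt_eq_rpow _).symm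
    rw [this]
    exact Real.continuous_sqrt.measurable.comp (measurable_detSym p)
  · exact Real.measurable_exp.comp ((measurable_quad p (Y i) (Y i)).neg.div_const 2)

lemma qKL_nonneg {p n : ℕ} {pr : Matrix (Fin p) (Fin p) ℝ → ℝ} (hpr : ∀ Ω, 0 ≤ pr Ω)
    (S : Finset (Fin n)) (Y : Fin n → (Fin p → ℝ)) (Ω : Matrix (Fin p) (Fin p) ℝ) :
    0 ≤ qKL pr S Y Ω := by
  refine mul_nonneg (Finset.prod_nonneg fun i _ => mul_nonneg ?_ (Real.exp_nonneg _)) (hpr Ω)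
  rw [← Real.sqrt_eq_rpow]
  exact Real.sqrt_nonneg _

lemma qKL_factor {p n : ℕ} (pr : Matrix (Fin p) (Fin p) ℝ → ℝ)
    {K L : Finset (Fin n)} (hdisj : Disjoint K L) (hcover : K ∪ L = Finset.univ)
    (z : ℝ) (a b : Fin n → (Fin p → ℝ)) (Ω : Matrix (Fin p) (Fin p) ℝ) :
    qKL pr Finset.univ (yData z K a b) Ω =
      (∏ i ∈ L, Ω.det ^ (1 / 2 : ℝ) *
        Real.exp (-((a i + z • b i) ⬝ᵥ (Ω *ᵥ (a i + z • b i))) / 2)) * qKL pr K a Ω := by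
  classical
  unfold qKL yData
  rw [← hcover, Finset.prod_union hdisj]
  have h1 : ∀ i ∈ K, Ω.det ^ (1 / 2 : ℝ) *
      Real.exp (-((if i ∈ K then a i else a i + z • b i) ⬝ᵥ
        (Ω *ᵥ (if i ∈ K then a i else a i + z • b i))) / 2) =
      Ω.det ^ (1 / 2 : ℝ) * Real.exp (-(a i ⬝ᵥ (Ω *ᵥ a i)) / 2) := fun i hi => by
    simp [hi]
  have h2 : ∀ i ∈ L, Ω.det ^ (1 / 2 : ℝ) *
      Real.exp (-((if i ∈ K then a i else a i + z • b i) ⬝ᵥ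
        (Ω *ᵥ (if i ∈ K then a i else a i + z • b i))) / 2) =
      Ω.det ^ (1 / 2 : ℝ) *
        Real.exp (-((a i + z • b i) ⬝ᵥ (Ω *ᵥ (a i + z • b i))) / 2) := fun i hi => by
    have : i ∉ K := Finset.disjoint_right.mp hdisj hi
    simp [this]
  rw [Finset.prod_congr rfl h1, Finset.prod_congr rfl h2]
  ring

lemma quad_expand {p : ℕ} (Ω : Matrix (Fin p) (Fin p) ℝ) (u v : Fin p → ℝ) (z : ℝ) :
    (u + z • v) ⬝ᵥ (Ω *ᵥ (u + z • v)) =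
      u ⬝ᵥ (Ω *ᵥ u) + z * (u ⬝ᵥ (Ω *ᵥ v) + v ⬝ᵥ (Ω *ᵥ u)) + z ^ 2 * (v ⬝ᵥ (Ω *ᵥ v)) := by
  simp only [mulVec_add, mulVec_smul, add_dotProduct, smul_dotProduct, dotProduct_add,
    dotProduct_smul, smul_eq_mul]
  ring

lemma psd_quad_nonneg {p : ℕ} {Ω : Matrix (Fin p) (Fin p) ℝ} (h : Ω.PosSemidef)
    (v : Fin p → ℝ) : 0 ≤ v ⬝ᵥ (Ω *ᵥ v) := by
  have := h.dotProduct_mulVec_nonneg v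
  simpa using this

lemma quad_single {p : ℕ} (j0 : Fin p) (v : Fin p → ℝ) :
    v ⬝ᵥ (symOfUpper p (Pi.single ⟨(j0, j0), le_refl j0⟩ (1:ℝ)) *ᵥ v) = v j0 * v j0 := by
  classical
  have hmat : ∀ i j : Fin p, symOfUpper p (Pi.single ⟨(j0, j0), le_refl j0⟩ (1:ℝ)) i j
      = if i = j0 ∧ j = j0 then 1 else 0 := by
    intro i j
    by_cases h : i ≤ j
    · simp only [symOfUpper, Matrix.of_apply, h, dite_true, Pi.single_apply,
        Subtype.ext_iff, Prod.ext_iff]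
    · simp only [symOfUpper, Matrix.of_apply, h, dite_false, Pi.single_apply,
        Subtype.ext_iff, Prod.ext_iff]
      split_ifs with h1 h2 <;> first | rfl | tauto
  simp only [dotProduct, mulVec, hmat, ite_and, ite_mul, mul_ite, one_mul, zero_mul, mul_zero,
    mul_one, Finset.mul_sum]
  rw [Finset.sum_eq_single j0]
  · rw [Finset.sum_eq_single j0] <;> simp +contextual
  · intro i _ hi
    simp [hi]
  · simp

/-- Pointwise upper bound on the good set. -/
lemma key_bound_up {p n : ℕ} {pr : Matrix (Fin p) (Fin p) ℝ → ℝ}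
    (hpr_nonneg : ∀ Ω, 0 ≤ pr Ω)
    (hpr_supp : ∀ Ω : Matrix (Fin p) (Fin p) ℝ, ¬ Ω.PosDef → pr Ω = 0)
    {K L : Finset (Fin n)} (hdisj : Disjoint K L) (hcover : K ∪ L = Finset.univ)
    (a b : Fin n → (Fin p → ℝ)) {m M : ℝ} {z : ℝ} (hz : 0 ≤ z)
    (x : {ij : Fin p × Fin p // ij.1 ≤ ij.2} → ℝ)
    (hxB : m ≤ ∑ i ∈ L, (b i) ⬝ᵥ (symOfUpper p x *ᵥ (b i)))
    (hxC : ∑ i ∈ L, |(a i) ⬝ᵥ (symOfUpper p x *ᵥ (b i)) + (b i) ⬝ᵥ (symOfUpper p x *ᵥ (a i))| ≤ M)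
    (hxD : (symOfUpper p x).det ≤ M) :
    qKL pr Finset.univ (yData z K a b) (symOfUpper p x) ≤
      (Real.sqrt M ^ L.card * Real.exp ((z * M - z ^ 2 * m) / 2)) *
        qKL pr K a (symOfUpper p x) := by
  classical
  set Ω := symOfUpper p x with hΩ
  rcases eq_or_ne (pr Ω) 0 with h0 | h0
  · have h1 : qKL pr K a Ω = 0 := by simp [qKL, h0]
    have h2 : qKL pr Finset.univ (yData z K a b) Ω = 0 := by simp [qKL, h0]
    simp [h1, h2]
  · have hpd : Ω.PosDef := by
      by_contra hnpd
      exact h0 (hpr_supp _ hnpd)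
    rw [qKL_factor pr hdisj hcover z a b Ω]
    refine mul_le_mul_of_nonneg_right ?_ (qKL_nonneg hpr_nonneg _ _ _)
    rw [Finset.prod_mul_distrib, Finset.prod_const, ← Real.exp_sum]
    have hM0 : 0 ≤ M := le_trans (Finset.sum_nonneg fun i _ => abs_nonneg _) hxC
    have hdet0 : 0 ≤ Ω.det := hpd.det_pos.le
    refine mul_le_mul ?_ ?_ (Real.exp_pos _).le (by positivity)
    · rw [← Real.sqrt_eq_rpow]
      exact pow_le_pow_left₀ (Real.sqrt_nonneg _) (Real.sqrt_le_sqrt hxD) _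
    · rw [Real.exp_le_exp]
      have hQ : ∀ i ∈ L, -((a i + z • b i) ⬝ᵥ (Ω *ᵥ (a i + z • b i))) / 2 =
          -((a i ⬝ᵥ (Ω *ᵥ a i)) + z * ((a i ⬝ᵥ (Ω *ᵥ b i)) + (b i ⬝ᵥ (Ω *ᵥ a i)))
            + z ^ 2 * ((b i) ⬝ᵥ (Ω *ᵥ b i))) / 2 := fun i _ => by
        rw [quad_expand]
      rw [Finset.sum_congr rfl hQ]
      have e1 : ∑ i ∈ L, -((a i ⬝ᵥ (Ω *ᵥ a i)) + z * ((a i ⬝ᵥ (Ω *ᵥ b i)) + (b i ⬝ᵥ (Ω *ᵥ a i)))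
            + z ^ 2 * ((b i) ⬝ᵥ (Ω *ᵥ b i))) / 2
          = -((∑ i ∈ L, (a i ⬝ᵥ (Ω *ᵥ a i)))
              + z * (∑ i ∈ L, ((a i ⬝ᵥ (Ω *ᵥ b i)) + (b i ⬝ᵥ (Ω *ᵥ a i))))
              + z ^ 2 * (∑ i ∈ L, (b i) ⬝ᵥ (Ω *ᵥ b i))) / 2 := by
        rw [Finset.mul_sum, Finset.mul_sum, ← Finset.sum_add_distrib, ← Finset.sum_add_distrib]
        rw [← Finset.sum_neg_distrib, ← Finset.sum_div]
      rw [e1]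
      have hA : 0 ≤ ∑ i ∈ L, (a i ⬝ᵥ (Ω *ᵥ a i)) :=
        Finset.sum_nonneg fun i _ => psd_quad_nonneg hpd.posSemidef (a i)
      have hC : -M ≤ ∑ i ∈ L, ((a i ⬝ᵥ (Ω *ᵥ b i)) + (b i ⬝ᵥ (Ω *ᵥ a i))) := by
        have h1 : ∑ i ∈ L, -|(a i ⬝ᵥ (Ω *ᵥ b i)) + (b i ⬝ᵥ (Ω *ᵥ a i))| ≤
            ∑ i ∈ L, ((a i ⬝ᵥ (Ω *ᵥ b i)) + (b i ⬝ᵥ (Ω *ᵥ a i))) :=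
          Finset.sum_le_sum fun i _ => neg_abs_le _
        rw [Finset.sum_neg_distrib] at h1
        linarith
      have hzC := mul_le_mul_of_nonneg_left hC hz
      have hzB := mul_le_mul_of_nonneg_left hxB (sq_nonneg z)
      nlinarith

/-- Pointwise lower bound on the low set. -/
lemma key_bound_low {p n : ℕ} {pr : Matrix (Fin p) (Fin p) ℝ → ℝ}
    (hpr_nonneg : ∀ Ω, 0 ≤ pr Ω)
    (hpr_supp : ∀ Ω : Matrix (Fin p) (Fin p) ℝ, ¬ Ω.PosDef → pr Ω = 0)
    {K L : Finset (Fin n)} (hdisj : Disjoint K L) (hcover : K ∪ L = Finset.univ)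
    (a b : Fin n → (Fin p → ℝ)) {s N d : ℝ} {z : ℝ} (hz : 0 ≤ z) (hd : 0 ≤ d)
    (x : {ij : Fin p × Fin p // ij.1 ≤ ij.2} → ℝ)
    (hxB : ∑ i ∈ L, (b i) ⬝ᵥ (symOfUpper p x *ᵥ (b i)) ≤ s)
    (hxC : ∑ i ∈ L, |(a i) ⬝ᵥ (symOfUpper p x *ᵥ (b i)) + (b i) ⬝ᵥ (symOfUpper p x *ᵥ (a i))| ≤ N)
    (hxA : ∑ i ∈ L, (a i) ⬝ᵥ (symOfUpper p x *ᵥ (a i)) ≤ N)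
    (hxD : d ≤ (symOfUpper p x).det) :
    (Real.sqrt d ^ L.card * Real.exp (-(N + z * N + z ^ 2 * s) / 2)) *
        qKL pr K a (symOfUpper p x) ≤
      qKL pr Finset.univ (yData z K a b) (symOfUpper p x) := by
  classical
  set Ω := symOfUpper p x with hΩ
  rcases eq_or_ne (pr Ω) 0 with h0 | h0
  · have h1 : qKL pr K a Ω = 0 := by simp [qKL, h0]
    have h2 : qKL pr Finset.univ (yData z K a b) Ω = 0 := by simp [qKL, h0]
    simp [h1, h2]
  · have hpd : Ω.PosDef := by
      by_contra hnpd
      exact h0 (hpr_supp _ hnpd)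
    rw [qKL_factor pr hdisj hcover z a b Ω]
    refine mul_le_mul_of_nonneg_right ?_ (qKL_nonneg hpr_nonneg _ _ _)
    rw [Finset.prod_mul_distrib, Finset.prod_const, ← Real.exp_sum]
    have hdet0 : 0 ≤ Ω.det := hpd.det_pos.le
    refine mul_le_mul ?_ ?_ (Real.exp_pos _).le (by positivity)
    · rw [← Real.sqrt_eq_rpow]
      exact pow_le_pow_left₀ (Real.sqrt_nonneg _) (Real.sqrt_le_sqrt hxD) _
    · rw [Real.exp_le_exp]
      have hQ : ∀ i ∈ L, -((a i + z • b i) ⬝ᵥ (Ω *ᵥ (a i + z • b i))) / 2 =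
          -((a i ⬝ᵥ (Ω *ᵥ a i)) + z * ((a i ⬝ᵥ (Ω *ᵥ b i)) + (b i ⬝ᵥ (Ω *ᵥ a i)))
            + z ^ 2 * ((b i) ⬝ᵥ (Ω *ᵥ b i))) / 2 := fun i _ => by
        rw [quad_expand]
      rw [Finset.sum_congr rfl hQ]
      have e1 : ∑ i ∈ L, -((a i ⬝ᵥ (Ω *ᵥ a i)) + z * ((a i ⬝ᵥ (Ω *ᵥ b i)) + (b i ⬝ᵥ (Ω *ᵥ a i)))
            + z ^ 2 * ((b i) ⬝ᵥ (Ω *ᵥ b i))) / 2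
          = -((∑ i ∈ L, (a i ⬝ᵥ (Ω *ᵥ a i)))
              + z * (∑ i ∈ L, ((a i ⬝ᵥ (Ω *ᵥ b i)) + (b i ⬝ᵥ (Ω *ᵥ a i))))
              + z ^ 2 * (∑ i ∈ L, (b i) ⬝ᵥ (Ω *ᵥ b i))) / 2 := by
        rw [Finset.mul_sum, Finset.mul_sum, ← Finset.sum_add_distrib, ← Finset.sum_add_distrib]
        rw [← Finset.sum_neg_distrib, ← Finset.sum_div]
      rw [e1]
      have hC : ∑ i ∈ L, ((a i ⬝ᵥ (Ω *ᵥ b i)) + (b i ⬝ᵥ (Ω *ᵥ a i))) ≤ N := by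
        have h1 : ∑ i ∈ L, ((a i ⬝ᵥ (Ω *ᵥ b i)) + (b i ⬝ᵥ (Ω *ᵥ a i))) ≤
            ∑ i ∈ L, |(a i ⬝ᵥ (Ω *ᵥ b i)) + (b i ⬝ᵥ (Ω *ᵥ a i))| :=
          Finset.sum_le_sum fun i _ => le_abs_self _
        linarith
      have hzC := mul_le_mul_of_nonneg_left hC hz
      have hzB := mul_le_mul_of_nonneg_left hxB (sq_nonneg z)
      nlinarith

/-- `g z x` : the unnormalized posterior with the full (outlier-contaminated) data. -/
noncomputable def gA {p n : ℕ} (pr : Matrix (Fin p) (Fin p) ℝ → ℝ) (K : Finset (Fin n))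
    (a b : Fin n → (Fin p → ℝ)) (z : ℝ) (x : {ij : Fin p × Fin p // ij.1 ≤ ij.2} → ℝ) : ℝ :=
  qKL pr Finset.univ (yData z K a b) (symOfUpper p x)

/-- `gB x` : the unnormalized posterior with the non-outlying data. -/
noncomputable def gB {p n : ℕ} (pr : Matrix (Fin p) (Fin p) ℝ → ℝ) (K : Finset (Fin n))
    (a : Fin n → (Fin p → ℝ)) (x : {ij : Fin p × Fin p // ij.1 ≤ ij.2} → ℝ) : ℝ :=
  qKL pr K a (symOfUpper p x)

set_option maxHeartbeats 1000000 in
/-- The standard Gaussian (KL) posterior does not satisfy posterior robustness. -/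
theorem stmt2 (p n : ℕ)
    (K L : Finset (Fin n)) (hdisj : Disjoint K L) (hcover : K ∪ L = Finset.univ)
    (hL : L.Nonempty)
    (a b : Fin n → (Fin p → ℝ)) (hb : ∀ i ∈ L, b i ≠ 0)
    (pr : Matrix (Fin p) (Fin p) ℝ → ℝ) (hpr_meas : Measurable pr)
    (hpr_nonneg : ∀ Ω, 0 ≤ pr Ω)
    (hpr_supp : ∀ Ω : Matrix (Fin p) (Fin p) ℝ, ¬ Ω.PosDef → pr Ω = 0)
    (hint : ∀ Y : Fin n → (Fin p → ℝ),
      Integrable (fun x : {ij : Fin p × Fin p // ij.1 ≤ ij.2} → ℝ =>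
        qKL pr Finset.univ Y (symOfUpper p x)))
    (hpos : ∀ z : ℝ, 0 < z →
      0 < ∫ x, qKL pr Finset.univ (yData z K a b) (symOfUpper p x))
    (hpos_star : 0 < ∫ x, qKL pr K a (symOfUpper p x)) :
    ¬ Tendsto (fun z : ℝ =>
        ∫ x, |qKL pr Finset.univ (yData z K a b) (symOfUpper p x) /
                (∫ x', qKL pr Finset.univ (yData z K a b) (symOfUpper p x')) -
              qKL pr K a (symOfUpper p x) /
                (∫ x', qKL pr K a (symOfUpper p x'))|)
      atTop (𝓝 0) := by
  classical
  intro H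
  have H' : Tendsto (fun z : ℝ =>
      ∫ x, |gA pr K a b z x / (∫ x', gA pr K a b z x') -
            gB pr K a x / (∫ x', gB pr K a x')|) atTop (𝓝 0) := H
  have hIs : (0:ℝ) < ∫ x, gB pr K a x := hpos_star
  have hposA : ∀ z : ℝ, 0 < z → 0 < ∫ x, gA pr K a b z x := hpos
  have hIntA : ∀ z : ℝ, Integrable (gA pr K a b z) := fun z => hint (yData z K a b)
  have hIntB : Integrable (gB pr K a) := by
    by_contra hc
    rw [integral_undef hc] at hIs
    exact lt_irrefl 0 hIs
  have hgA0 : ∀ z x, 0 ≤ gA pr K a b z x := fun z x => qKL_nonneg hpr_nonneg _ _ _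
  have hgB0 : ∀ x, 0 ≤ gB pr K a x := fun x => qKL_nonneg hpr_nonneg _ _ _
  set Is : ℝ := ∫ x, gB pr K a x with hIsdef
  set Bf : ({ij : Fin p × Fin p // ij.1 ≤ ij.2} → ℝ) → ℝ :=
    fun x => ∑ i ∈ L, (b i) ⬝ᵥ (symOfUpper p x *ᵥ (b i)) with hBfdef
  set Cf : ({ij : Fin p × Fin p // ij.1 ≤ ij.2} → ℝ) → ℝ :=
    fun x => ∑ i ∈ L, |(a i) ⬝ᵥ (symOfUpper p x *ᵥ (b i)) +
      (b i) ⬝ᵥ (symOfUpper p x *ᵥ (a i))| with hCfdef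
  set Af : ({ij : Fin p × Fin p // ij.1 ≤ ij.2} → ℝ) → ℝ :=
    fun x => ∑ i ∈ L, (a i) ⬝ᵥ (symOfUpper p x *ᵥ (a i)) with hAfdef
  have hmBf : Measurable Bf := by
    rw [hBfdef]
    exact Finset.measurable_sum _ fun i _ => measurable_quad p (b i) (b i)
  have hmCf : Measurable Cf := by
    rw [hCfdef]
    exact Finset.measurable_sum _ fun i _ =>
      ((measurable_quad p (a i) (b i)).add (measurable_quad p (b i) (a i))).abs
  have hmAf : Measurable Af := by
    rw [hAfdef]
    exact Finset.measurable_sum _ fun i _ => measurable_quad p (a i) (a i)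
  have hmDf : Measurable fun x : {ij : Fin p × Fin p // ij.1 ≤ ij.2} → ℝ =>
      (symOfUpper p x).det := measurable_detSym p
  set ν : Measure ({ij : Fin p × Fin p // ij.1 ≤ ij.2} → ℝ) :=
    volume.withDensity (fun x => ENNReal.ofReal (gB pr K a x)) with hνdef
  have bridge : ∀ s : Set ({ij : Fin p × Fin p // ij.1 ≤ ij.2} → ℝ), MeasurableSet s →
      ν s = ENNReal.ofReal (∫ x in s, gB pr K a x) := by
    intro s hs
    rw [hνdef, withDensity_apply _ hs,
      ← ofReal_integral_eq_lintegral_ofReal hIntB.integrableOn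
        (Filter.Eventually.of_forall fun x => hgB0 x)]
  have bridge_pos : ∀ s : Set ({ij : Fin p × Fin p // ij.1 ≤ ij.2} → ℝ), MeasurableSet s →
      ν s ≠ 0 → 0 < ∫ x in s, gB pr K a x := by
    intro s hs h
    rw [bridge s hs] at h
    by_contra hc
    push_neg at hc
    exact h (ENNReal.ofReal_eq_zero.mpr hc)
  have hgB_zero : ∀ x, ¬ (symOfUpper p x).PosDef → gB pr K a x = 0 := by
    intro x h
    unfold gB qKL
    rw [hpr_supp _ h, mul_zero]
  have hν_of_zero : ∀ s : Set ({ij : Fin p × Fin p // ij.1 ≤ ij.2} → ℝ), MeasurableSet s →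
      (∀ x ∈ s, gB pr K a x = 0) → ν s = 0 := by
    intro s hs h
    rw [bridge s hs, setIntegral_congr_fun hs h, integral_zero, ENNReal.ofReal_zero]
  have hνuniv : ν Set.univ ≠ 0 := by
    rw [bridge _ MeasurableSet.univ, setIntegral_univ]
    exact fun hc => (not_le.mpr hIs) (ENNReal.ofReal_eq_zero.mp hc)
  have hB_nonneg : ∀ x, (symOfUpper p x).PosDef → 0 ≤ Bf x := by
    intro x h
    rw [hBfdef]
    exact Finset.sum_nonneg fun i _ => psd_quad_nonneg h.posSemidef (b i)
  have hmsBle : ∀ t : ℝ, MeasurableSet {x | Bf x ≤ t} :=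
    fun t => measurableSet_le hmBf measurable_const
  set T : Set ℝ := {t | ν {x | Bf x ≤ t} ≠ 0} with hTdef
  have hTne : T.Nonempty := by
    by_contra hc
    rw [Set.not_nonempty_iff_eq_empty] at hc
    apply hνuniv
    have hun : (Set.univ : Set ({ij : Fin p × Fin p // ij.1 ≤ ij.2} → ℝ)) =
        ⋃ Mn : ℕ, {x | Bf x ≤ (Mn:ℝ)} := by
      ext x
      simp only [Set.mem_univ, Set.mem_iUnion, Set.mem_setOf_eq, true_iff]
      obtain ⟨Mn, hMn⟩ := exists_nat_ge (Bf x)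
      exact ⟨Mn, hMn⟩
    rw [hun]
    refine measure_iUnion_null fun Mn => ?_
    by_contra hMn
    exact (Set.eq_empty_iff_forall_notMem.mp hc (Mn:ℝ)) hMn
  have hT_lb : ∀ t ∈ T, (0:ℝ) ≤ t := by
    intro t ht
    by_contra hc
    push_neg at hc
    apply ht
    refine hν_of_zero _ (hmsBle t) fun x hx => hgB_zero x fun hpd => ?_
    have h1 := hB_nonneg x hpd
    have hxt : Bf x ≤ t := hx
    linarith
  have hTbdd : BddBelow T := ⟨0, fun t ht => hT_lb t ht⟩
  set s0 : ℝ := sInf T with hs0def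
  have hlow : ∀ ε : ℝ, 0 < ε → ν {x | Bf x ≤ s0 + ε} ≠ 0 := by
    intro ε hε
    obtain ⟨t, htT, htl⟩ := (csInf_lt_iff hTbdd hTne).mp (lt_add_of_pos_right s0 hε)
    intro hc
    exact htT (measure_mono_null (fun x hx => le_trans hx htl.le) hc)
  have hBlin : ∃ ℓ : ({ij : Fin p × Fin p // ij.1 ≤ ij.2} → ℝ) →ₗ[ℝ] ℝ,
      (∀ x, ℓ x = Bf x) ∧ ℓ ≠ 0 := by
    refine ⟨∑ i ∈ L, quadForm p (b i) (b i), fun x => ?_, ?_⟩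
    · rw [hBfdef]
      simp [LinearMap.sum_apply]
    · obtain ⟨i0, hi0⟩ := hL
      obtain ⟨j0, hj0⟩ : ∃ j, b i0 j ≠ 0 := Function.ne_iff.mp (hb i0 hi0)
      set x0 : {ij : Fin p × Fin p // ij.1 ≤ ij.2} → ℝ :=
        Pi.single ⟨(j0, j0), le_refl j0⟩ 1 with hx0
      intro hc
      have happ : (∑ i ∈ L, quadForm p (b i) (b i)) x0 = ∑ i ∈ L, b i j0 * b i j0 := by
        simp only [LinearMap.sum_apply, quadForm_apply, hx0]
        exact Finset.sum_congr rfl fun i _ => quad_single j0 (b i)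
      have hpos0 : 0 < ∑ i ∈ L, b i j0 * b i j0 :=
        Finset.sum_pos' (fun i _ => mul_self_nonneg _) ⟨i0, hi0, mul_self_pos.mpr hj0⟩
      rw [hc] at happ
      simp only [LinearMap.zero_apply] at happ
      exact absurd happ.symm (ne_of_gt hpos0)
  obtain ⟨ℓB, hℓB, hℓBne⟩ := hBlin
  have hlevel : ∀ t : ℝ, ν {x | Bf x = t} = 0 := by
    intro t
    have hseteq : {x | Bf x = t} = {x | ℓB x = t} := by
      ext x; simp [hℓB x]
    rw [hseteq, hνdef]
    exact withDensity_absolutelyContinuous volume _ (volume_level_set hℓBne t)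
  have hm_exists : ∃ m : ℝ, s0 < m ∧ ν {x | m ≤ Bf x} ≠ 0 := by
    by_contra hc
    push_neg at hc
    apply hνuniv
    have hsub : (Set.univ : Set ({ij : Fin p × Fin p // ij.1 ≤ ij.2} → ℝ)) ⊆
        {x | Bf x < s0} ∪ ({x | Bf x = s0} ∪ {x | s0 < Bf x}) := by
      intro x _
      rcases lt_trichotomy (Bf x) s0 with h | h | h
      · exact Or.inl h
      · exact Or.inr (Or.inl h)
      · exact Or.inr (Or.inr h)
    have h1 : ν {x | Bf x < s0} = 0 := by
      have hun : {x | Bf x < s0} = ⋃ j : ℕ, {x | Bf x ≤ s0 - 1/(j+1)} := by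
        ext x
        simp only [Set.mem_setOf_eq, Set.mem_iUnion]
        constructor
        · intro h
          obtain ⟨j, hj⟩ := exists_nat_one_div_lt (show (0:ℝ) < s0 - Bf x by linarith)
          exact ⟨j, by push_cast at hj ⊢; linarith⟩
        · rintro ⟨j, hj⟩
          have hj0 : (0:ℝ) < 1/((j:ℝ)+1) := by positivity
          linarith
      rw [hun]
      refine measure_iUnion_null fun j => ?_
      by_contra hj
      have hjT : (s0 - 1/((j:ℝ)+1) : ℝ) ∈ T := hj
      have hle := csInf_le hTbdd hjT
      have hpos' : (0:ℝ) < 1/((j:ℝ)+1) := by positivity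
      rw [← hs0def] at hle
      linarith
    have h2 : ν {x | Bf x = s0} = 0 := hlevel s0
    have h3 : ν {x | s0 < Bf x} = 0 := by
      have hun : {x | s0 < Bf x} = ⋃ j : ℕ, {x | s0 + 1/(j+1) ≤ Bf x} := by
        ext x
        simp only [Set.mem_setOf_eq, Set.mem_iUnion]
        constructor
        · intro h
          obtain ⟨j, hj⟩ := exists_nat_one_div_lt (show (0:ℝ) < Bf x - s0 by linarith)
          exact ⟨j, by push_cast at hj ⊢; linarith⟩
        · rintro ⟨j, hj⟩
          have hj0 : (0:ℝ) < 1/((j:ℝ)+1) := by positivity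
          linarith
      rw [hun]
      exact measure_iUnion_null fun j =>
        hc _ (lt_add_of_pos_right s0 (by positivity))
    have hle : ν Set.univ ≤ 0 := by
      calc ν Set.univ ≤ ν ({x | Bf x < s0} ∪ ({x | Bf x = s0} ∪ {x | s0 < Bf x})) :=
            measure_mono hsub
        _ ≤ ν {x | Bf x < s0} + ν ({x | Bf x = s0} ∪ {x | s0 < Bf x}) := measure_union_le _ _
        _ = 0 := by rw [h1, measure_union_null h2 h3, add_zero]
    exact le_antisymm hle zero_le
  obtain ⟨m, hms0, hνm⟩ := hm_exists
  -- choose the good set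
  have hmsM : ∀ Mn : ℕ, MeasurableSet {x | m ≤ Bf x ∧ Cf x ≤ (Mn:ℝ) ∧
      (symOfUpper p x).det ≤ (Mn:ℝ)} := by
    intro Mn
    rw [Set.setOf_and, Set.setOf_and]
    exact (measurableSet_le measurable_const hmBf).inter
      ((measurableSet_le hmCf measurable_const).inter
        (measurableSet_le hmDf measurable_const))
  obtain ⟨M, hνM⟩ : ∃ Mn : ℕ, ν {x | m ≤ Bf x ∧ Cf x ≤ (Mn:ℝ) ∧
      (symOfUpper p x).det ≤ (Mn:ℝ)} ≠ 0 := by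
    by_contra hc
    push_neg at hc
    apply hνm
    have hun : {x | m ≤ Bf x} = ⋃ Mn : ℕ, {x | m ≤ Bf x ∧ Cf x ≤ (Mn:ℝ) ∧
        (symOfUpper p x).det ≤ (Mn:ℝ)} := by
      ext x
      simp only [Set.mem_setOf_eq, Set.mem_iUnion]
      constructor
      · intro h
        obtain ⟨Mn, hMn⟩ := exists_nat_ge (max (Cf x) ((symOfUpper p x).det))
        exact ⟨Mn, h, le_trans (le_max_left _ _) hMn, le_trans (le_max_right _ _) hMn⟩
      · rintro ⟨Mn, h, -, -⟩; exact h
    rw [hun]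
    exact measure_iUnion_null hc
  set sM : Set ({ij : Fin p × Fin p // ij.1 ≤ ij.2} → ℝ) :=
    {x | m ≤ Bf x ∧ Cf x ≤ (M:ℝ) ∧ (symOfUpper p x).det ≤ (M:ℝ)} with hsMdef
  set ρ : ℝ := ∫ x in sM, gB pr K a x with hρdef
  have hρ : 0 < ρ := bridge_pos _ (hmsM M) hνM
  have hρIs : ρ ≤ Is :=
    setIntegral_le_integral hIntB (Filter.Eventually.of_forall hgB0)
  set eps : ℝ := (m - s0)/2 with hepsdef
  have heps : 0 < eps := by rw [hepsdef]; linarith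
  -- choose the low set
  have hmsN : ∀ Nn : ℕ, MeasurableSet {x | Bf x ≤ s0 + eps ∧ Cf x ≤ (Nn:ℝ) ∧
      Af x ≤ (Nn:ℝ) ∧ ((Nn:ℝ)+1)⁻¹ ≤ (symOfUpper p x).det} := by
    intro Nn
    rw [Set.setOf_and, Set.setOf_and, Set.setOf_and]
    exact (measurableSet_le hmBf measurable_const).inter
      ((measurableSet_le hmCf measurable_const).inter
        ((measurableSet_le hmAf measurable_const).inter
          (measurableSet_le measurable_const hmDf)))
  have hdet_zero : ν {x | (symOfUpper p x).det ≤ 0} = 0 := by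
    refine hν_of_zero _ (measurableSet_le hmDf measurable_const)
      fun x hx => hgB_zero x fun hpd => ?_
    have h1 := hpd.det_pos
    have hxd : (symOfUpper p x).det ≤ 0 := hx
    linarith
  have hνbase : ν {x | Bf x ≤ s0 + eps ∧ 0 < (symOfUpper p x).det} ≠ 0 := by
    intro hc
    apply hlow eps heps
    refine measure_mono_null (fun x hx => ?_) (measure_union_null hc hdet_zero)
    rcases lt_or_ge 0 ((symOfUpper p x).det) with h | h
    · exact Or.inl ⟨hx, h⟩
    · exact Or.inr h
  obtain ⟨N, hνN⟩ : ∃ Nn : ℕ, ν {x | Bf x ≤ s0 + eps ∧ Cf x ≤ (Nn:ℝ) ∧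
      Af x ≤ (Nn:ℝ) ∧ ((Nn:ℝ)+1)⁻¹ ≤ (symOfUpper p x).det} ≠ 0 := by
    by_contra hc
    push_neg at hc
    apply hνbase
    have hun : {x | Bf x ≤ s0 + eps ∧ 0 < (symOfUpper p x).det} =
        ⋃ Nn : ℕ, {x | Bf x ≤ s0 + eps ∧ Cf x ≤ (Nn:ℝ) ∧ Af x ≤ (Nn:ℝ) ∧
          ((Nn:ℝ)+1)⁻¹ ≤ (symOfUpper p x).det} := by
      ext x
      simp only [Set.mem_setOf_eq, Set.mem_iUnion]
      constructor
      · rintro ⟨h1, h2⟩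
        obtain ⟨Nn, hNn⟩ := exists_nat_ge (max (max (Cf x) (Af x)) ((symOfUpper p x).det)⁻¹)
        refine ⟨Nn, h1, le_trans (le_trans (le_max_left _ _) (le_max_left _ _)) hNn,
          le_trans (le_trans (le_max_right _ _) (le_max_left _ _)) hNn, ?_⟩
        have hinv : ((symOfUpper p x).det)⁻¹ < (Nn:ℝ)+1 :=
          lt_of_le_of_lt (le_trans (le_max_right _ _) hNn) (lt_add_one _)
        have h5 := inv_strictAnti₀ (by positivity) hinv
        rw [inv_inv] at h5
        exact h5.le
      · rintro ⟨Nn, h1, -, -, h4⟩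
        exact ⟨h1, lt_of_lt_of_le (by positivity) h4⟩
    rw [hun]
    exact measure_iUnion_null hc
  set sN : Set ({ij : Fin p × Fin p // ij.1 ≤ ij.2} → ℝ) :=
    {x | Bf x ≤ s0 + eps ∧ Cf x ≤ (N:ℝ) ∧ Af x ≤ (N:ℝ) ∧
      ((N:ℝ)+1)⁻¹ ≤ (symOfUpper p x).det} with hsNdef
  set J : ℝ := ∫ x in sN, gB pr K a x with hJdef
  have hJ : 0 < J := bridge_pos _ (hmsN N) hνN
  -- constants
  set CU : ℝ := Real.sqrt (M:ℝ) ^ L.card with hCUdef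
  set CL : ℝ := Real.sqrt (((N:ℝ)+1)⁻¹) ^ L.card with hCLdef
  have hCL : 0 < CL := by
    rw [hCLdef]
    exact pow_pos (Real.sqrt_pos.mpr (by positivity)) _
  have hCU : 0 ≤ CU := by
    rw [hCUdef]
    positivity
  set c1 : ℝ := CL * J * (ρ / (2*Is)) with hc1def
  set c2 : ℝ := CU * Is with hc2def
  have hhalf : (0:ℝ) < ρ / (2*Is) := div_pos hρ (by linarith)
  have hc1 : 0 < c1 := by
    rw [hc1def]
    exact mul_pos (mul_pos hCL hJ) hhalf
  -- the eventual chain of inequalities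
  have hev1 : ∀ᶠ z in atTop, c1 ≤ c2 *
      Real.exp ((z*(M:ℝ) - z^2*m)/2 + (((N:ℝ) + z*(N:ℝ) + z^2*(s0+eps)))/2) := by
    filter_upwards [eventually_ge_atTop (1:ℝ), H'.eventually_lt_const hhalf] with z hz1 hzTV
    have hz0 : (0:ℝ) ≤ z := by linarith
    have hIz : 0 < ∫ x, gA pr K a b z x := hposA z (by linarith)
    have h3 : ∫ x in sM, gA pr K a b z x ≤
        CU * Real.exp ((z*(M:ℝ) - z^2*m)/2) * Is := by
      have hpt : ∀ x ∈ sM, gA pr K a b z x ≤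
          (CU * Real.exp ((z*(M:ℝ) - z^2*m)/2)) * gB pr K a x := by
        intro x hx
        rw [hCUdef]
        exact key_bound_up hpr_nonneg hpr_supp hdisj hcover a b hz0 x hx.1 hx.2.1 hx.2.2
      calc ∫ x in sM, gA pr K a b z x
          ≤ ∫ x in sM, (CU * Real.exp ((z*(M:ℝ) - z^2*m)/2)) * gB pr K a x :=
            setIntegral_mono_on (hIntA z).integrableOn
              ((hIntB.const_mul _).integrableOn) (hmsM M) hpt
        _ = (CU * Real.exp ((z*(M:ℝ) - z^2*m)/2)) * ρ := by
            rw [MeasureTheory.integral_const_mul]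
        _ ≤ CU * Real.exp ((z*(M:ℝ) - z^2*m)/2) * Is := by
            exact mul_le_mul_of_nonneg_left hρIs
              (mul_nonneg hCU (Real.exp_nonneg _))
    have h1 : CL * Real.exp (-((N:ℝ) + z*(N:ℝ) + z^2*(s0+eps))/2) * J ≤
        ∫ x, gA pr K a b z x := by
      have hpt : ∀ x ∈ sN, (CL * Real.exp (-((N:ℝ) + z*(N:ℝ) + z^2*(s0+eps))/2)) *
          gB pr K a x ≤ gA pr K a b z x := by
        intro x hx
        rw [hCLdef]
        exact key_bound_low hpr_nonneg hpr_supp hdisj hcover a b hz0 (by positivity) x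
          hx.1 hx.2.1 hx.2.2.1 hx.2.2.2
      calc CL * Real.exp (-((N:ℝ) + z*(N:ℝ) + z^2*(s0+eps))/2) * J
          = ∫ x in sN, (CL * Real.exp (-((N:ℝ) + z*(N:ℝ) + z^2*(s0+eps))/2)) *
              gB pr K a x := by
            rw [MeasureTheory.integral_const_mul]
        _ ≤ ∫ x in sN, gA pr K a b z x :=
            setIntegral_mono_on ((hIntB.const_mul _).integrableOn)
              (hIntA z).integrableOn (hmsN N) hpt
        _ ≤ ∫ x, gA pr K a b z x :=
            setIntegral_le_integral (hIntA z) (Filter.Eventually.of_forall (hgA0 z))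
    have h2 : ρ/(2*Is) * (∫ x, gA pr K a b z x) ≤ ∫ x in sM, gA pr K a b z x := by
      have hFzint : Integrable (fun x => gA pr K a b z x / (∫ x', gA pr K a b z x')) :=
        (hIntA z).div_const _
      have hFsint : Integrable (fun x => gB pr K a x / Is) := hIntB.div_const _
      have hsubint : Integrable (fun x => gA pr K a b z x / (∫ x', gA pr K a b z x') -
          gB pr K a x / Is) := hFzint.sub hFsint
      have e3 : ∫ x in sM, (gA pr K a b z x / (∫ x', gA pr K a b z x') -
          gB pr K a x / Is) =
          (∫ x in sM, gA pr K a b z x) / (∫ x', gA pr K a b z x') - ρ / Is := by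
        rw [integral_sub hFzint.integrableOn hFsint.integrableOn, integral_div, integral_div]
      have e4 : |(∫ x in sM, gA pr K a b z x) / (∫ x', gA pr K a b z x') - ρ / Is| ≤
          ∫ x, |gA pr K a b z x / (∫ x', gA pr K a b z x') - gB pr K a x / Is| := by
        rw [← e3]
        refine le_trans ?_ (setIntegral_le_integral (s := sM) hsubint.abs
          (Filter.Eventually.of_forall fun x => abs_nonneg _))
        simpa [Real.norm_eq_abs] using MeasureTheory.norm_integral_le_integral_norm
          (μ := volume.restrict sM)
          (fun x => gA pr K a b z x / (∫ x', gA pr K a b z x') - gB pr K a x / Is)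
      have e5 : |(∫ x in sM, gA pr K a b z x) / (∫ x', gA pr K a b z x') - ρ / Is| ≤
          ρ/(2*Is) := e4.trans hzTV.le
      have hsplit : ρ/Is - ρ/(2*Is) = ρ/(2*Is) := by
        field_simp
        ring
      have e6 := (abs_le.mp e5).1
      have e7 : ρ/(2*Is) ≤ (∫ x in sM, gA pr K a b z x) / (∫ x', gA pr K a b z x') := by
        linarith
      exact (le_div_iff₀ hIz).mp e7
    have hchain : c1 * Real.exp (-((N:ℝ) + z*(N:ℝ) + z^2*(s0+eps))/2) ≤
        c2 * Real.exp ((z*(M:ℝ) - z^2*m)/2) := by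
      calc c1 * Real.exp (-((N:ℝ) + z*(N:ℝ) + z^2*(s0+eps))/2)
          = ρ/(2*Is) * (CL * Real.exp (-((N:ℝ) + z*(N:ℝ) + z^2*(s0+eps))/2) * J) := by
            rw [hc1def]; ring
        _ ≤ ρ/(2*Is) * (∫ x, gA pr K a b z x) :=
            mul_le_mul_of_nonneg_left h1 hhalf.le
        _ ≤ ∫ x in sM, gA pr K a b z x := h2
        _ ≤ CU * Real.exp ((z*(M:ℝ) - z^2*m)/2) * Is := h3
        _ = c2 * Real.exp ((z*(M:ℝ) - z^2*m)/2) := by rw [hc2def]; ring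
    have h4 := mul_le_mul_of_nonneg_right hchain
      (Real.exp_pos (((N:ℝ) + z*(N:ℝ) + z^2*(s0+eps))/2)).le
    calc c1 = c1 * (Real.exp (-((N:ℝ) + z*(N:ℝ) + z^2*(s0+eps))/2) *
          Real.exp (((N:ℝ) + z*(N:ℝ) + z^2*(s0+eps))/2)) := by
          rw [← Real.exp_add, neg_div, neg_add_cancel, Real.exp_zero, mul_one]
      _ = c1 * Real.exp (-((N:ℝ) + z*(N:ℝ) + z^2*(s0+eps))/2) *
          Real.exp (((N:ℝ) + z*(N:ℝ) + z^2*(s0+eps))/2) := by ring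
      _ ≤ c2 * Real.exp ((z*(M:ℝ) - z^2*m)/2) *
          Real.exp (((N:ℝ) + z*(N:ℝ) + z^2*(s0+eps))/2) := h4
      _ = c2 * Real.exp ((z*(M:ℝ) - z^2*m)/2 + (((N:ℝ) + z*(N:ℝ) + z^2*(s0+eps)))/2) := by
          rw [mul_assoc, ← Real.exp_add]
  have harg : Tendsto (fun z : ℝ => (z*(M:ℝ) - z^2*m)/2 +
      (((N:ℝ) + z*(N:ℝ) + z^2*(s0+eps)))/2) atTop atBot := by
    refine tendsto_atBot_mono' atTop ?_ tendsto_neg_atTop_atBot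
    filter_upwards [eventually_ge_atTop (max 1 (((M:ℝ) + N + N + 2)/eps))] with z hz
    have hz1 : (1:ℝ) ≤ z := le_trans (le_max_left _ _) hz
    have hz2 : ((M:ℝ) + N + N + 2)/eps ≤ z := le_trans (le_max_right _ _) hz
    have hz2' : (M:ℝ) + N + N + 2 ≤ z * eps := (div_le_iff₀ heps).mp hz2
    have hN0 : (0:ℝ) ≤ N := Nat.cast_nonneg N
    have hm2 : m = s0 + 2*eps := by rw [hepsdef]; ring
    have hkey := mul_le_mul_of_nonneg_left hz2' (by linarith : (0:ℝ) ≤ z)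
    nlinarith [mul_nonneg (sub_nonneg.mpr hz1) hN0]
  have hev2 : ∀ᶠ z in atTop, c2 * Real.exp ((z*(M:ℝ) - z^2*m)/2 +
      (((N:ℝ) + z*(N:ℝ) + z^2*(s0+eps)))/2) < c1 := by
    have htend : Tendsto (fun z : ℝ => c2 * Real.exp ((z*(M:ℝ) - z^2*m)/2 +
        (((N:ℝ) + z*(N:ℝ) + z^2*(s0+eps)))/2)) atTop (𝓝 0) := by
      have h := Real.tendsto_exp_atBot.comp harg
      simpa using h.const_mul c2
    exact htend.eventually_lt_const hc1
  obtain ⟨z, h1', h2'⟩ := (hev1.and hev2).exists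
  exact absurd (h1'.trans_lt h2') (lt_irrefl c1)
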